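/- (Theorem 4.1) Let k ≥ d and let y* be a maximizer of the k-th order moment relaxation. Suppose for some integer t with d ≤ t ≤ k there exist r ≥ 1, positive scalars λ_1,…,λ_r, and distinct points v_1*,…,v_r* ∈ K such that y*_α = Σ_{j=1}^r λ_j (v_j*)^α for all α with |α| ≤ 2t. Then f_mom,k = f_mom. If in addition p_i(v_1*) = p_i(v_2*) = ⋯ = p_i(v_r*) for every i ∈ [m], then f_max = f_mom = f_mom,k and v_1*,…,v_r* are all global maximizers of (P). -/

import Mathlib

open MvPolynomial Finset Filter Topology

noncomputable section

/-- Extended-real logarithm with the convention `log t = -∞` for `t ≤ 0`. -/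
def elog (t : ℝ) : EReal := if 0 < t then ((Real.log t : ℝ) : EReal) else ⊥

/-- The degree `|α|` of a multi-index `α`. -/
def mdeg {n : ℕ} (α : Fin n →₀ ℕ) : ℕ := ∑ i, α i

/-- The monomial vector `[x]_{2d}`, modeled as the function on multi-indices
whose `α`-entry is `x^α` for `|α| ≤ 2d` (and `0` above the truncation degree). -/
def monoVec {n : ℕ} (d : ℕ) (x : Fin n → ℝ) : (Fin n →₀ ℕ) → ℝ :=
  fun α => if mdeg α ≤ 2 * d then ∏ i, x i ^ α i else 0

/-- The pairing `⟨p, z⟩ = ∑_α p_α z_α`. -/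
def pairing {n : ℕ} (p : MvPolynomial (Fin n) ℝ) (z : (Fin n →₀ ℕ) → ℝ) : ℝ :=
  ∑ α ∈ p.support, p.coeff α * z α

/-- The moment cone `R_d(S)`. -/
def momentCone {n : ℕ} (d : ℕ) (S : Set (Fin n → ℝ)) : Set ((Fin n →₀ ℕ) → ℝ) :=
  {z | ∃ (l : ℕ) (lam : Fin l → ℝ) (v : Fin l → (Fin n → ℝ)),
    (∀ j, 0 ≤ lam j) ∧ (∀ j, v j ∈ S) ∧ z = ∑ j, lam j • monoVec d (v j)}

/-- `⌈t/2⌉` for a natural number `t`. -/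
def ceilHalf (t : ℕ) : ℕ := (t + 1) / 2

/-- The objective `f(x) = ∑ᵢ aᵢ log pᵢ(x)` (with `log 0 = -∞`). -/
def fObj {n m : ℕ} (a : Fin m → ℝ) (p : Fin m → MvPolynomial (Fin n) ℝ)
    (x : Fin n → ℝ) : EReal :=
  ∑ i, (a i : EReal) * elog (eval x (p i))

/-- `f_max`, the optimal value of the log-polynomial optimization problem. -/
def fMax {n m : ℕ} (a : Fin m → ℝ) (p : Fin m → MvPolynomial (Fin n) ℝ)
    (K : Set (Fin n → ℝ)) : EReal :=
  sSup (fObj a p '' K)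

/-- The moment objective `∑ᵢ aᵢ log ⟨pᵢ, z⟩`. -/
def objVal {n m : ℕ} (a : Fin m → ℝ) (p : Fin m → MvPolynomial (Fin n) ℝ)
    (z : (Fin n →₀ ℕ) → ℝ) : EReal :=
  ∑ i, (a i : EReal) * elog (pairing (p i) z)

/-- `f_mom`, the optimal value of the convex relaxation over `R_d(S) ∩ {z₀ = 1}`. -/
def fMom {n m : ℕ} (d : ℕ) (a : Fin m → ℝ) (p : Fin m → MvPolynomial (Fin n) ℝ)
    (S : Set (Fin n → ℝ)) : EReal :=
  sSup (objVal a p '' {z ∈ momentCone d S | z 0 = 1})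

/-- `M_k[y] ⪰ 0`, encoded via quadratic forms whose coefficient vectors are
coefficient vectors of polynomials of degree at most `k`. -/
def momMatPSD {n : ℕ} (k : ℕ) (y : (Fin n →₀ ℕ) → ℝ) : Prop :=
  ∀ q : MvPolynomial (Fin n) ℝ, q.totalDegree ≤ k →
    0 ≤ ∑ α ∈ q.support, ∑ β ∈ q.support, q.coeff α * q.coeff β * y (α + β)

/-- The `(α,β)` entry of the localizing matrix `L_c^{(k)}[y]`. -/
def locEntry {n : ℕ} (c : MvPolynomial (Fin n) ℝ) (y : (Fin n →₀ ℕ) → ℝ)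
    (α β : Fin n →₀ ℕ) : ℝ :=
  ∑ γ ∈ c.support, c.coeff γ * y (γ + α + β)

/-- `L_c^{(k)}[y] = 0`. -/
def locMatZero {n : ℕ} (c : MvPolynomial (Fin n) ℝ) (k : ℕ)
    (y : (Fin n →₀ ℕ) → ℝ) : Prop :=
  ∀ α β : Fin n →₀ ℕ, mdeg α ≤ k - ceilHalf c.totalDegree →
    mdeg β ≤ k - ceilHalf c.totalDegree → locEntry c y α β = 0

/-- `L_c^{(k)}[y] ⪰ 0`. -/
def locMatPSD {n : ℕ} (c : MvPolynomial (Fin n) ℝ) (k : ℕ)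
    (y : (Fin n →₀ ℕ) → ℝ) : Prop :=
  ∀ q : MvPolynomial (Fin n) ℝ, q.totalDegree ≤ k - ceilHalf c.totalDegree →
    0 ≤ ∑ α ∈ q.support, ∑ β ∈ q.support, q.coeff α * q.coeff β * locEntry c y α β

/-- Feasibility for the `k`-th order moment relaxation with equality constraint
polynomials `Eqs` and inequality constraint polynomials `Ineqs`. -/
def momFeasible {n : ℕ} (Eqs Ineqs : Set (MvPolynomial (Fin n) ℝ)) (k : ℕ)
    (y : (Fin n →₀ ℕ) → ℝ) : Prop :=
  y 0 = 1 ∧ momMatPSD k y ∧ (∀ c ∈ Eqs, locMatZero c k y) ∧ ∀ c ∈ Ineqs, locMatPSD c k y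

/-- `f_mom,k`, the optimal value of the `k`-th order moment relaxation. -/
def fMomK {n m : ℕ} (a : Fin m → ℝ) (p : Fin m → MvPolynomial (Fin n) ℝ)
    (Eqs Ineqs : Set (MvPolynomial (Fin n) ℝ)) (k : ℕ) : EReal :=
  sSup (objVal a p '' {y | momFeasible Eqs Ineqs k y})

/-- The value `f_γ` of the γ-program. -/
def fGamma {n m : ℕ} (a : Fin m → ℝ) (p : Fin m → MvPolynomial (Fin n) ℝ)
    (K : Set (Fin n → ℝ)) : EReal :=
  sInf {e : EReal | ∃ γ : Fin m → ℝ,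
    (∀ i, ∀ x ∈ K, (a i : EReal) * elog (eval x (p i)) ≤ ((γ i : ℝ) : EReal)) ∧
    e = ((∑ i, γ i : ℝ) : EReal)}

/-- A polynomial is a sum of squares. -/
def IsSOSPoly {n : ℕ} (σ : MvPolynomial (Fin n) ℝ) : Prop :=
  ∃ (t : ℕ) (r : Fin t → MvPolynomial (Fin n) ℝ), σ = ∑ j, (r j) ^ 2

/-- The set `Ideal[c_E] + QM[c_I]`. -/
def idealQM {n : ℕ} {ι : Type*} (E I : Finset ι) (c : ι → MvPolynomial (Fin n) ℝ) :
    Set (MvPolynomial (Fin n) ℝ) :=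
  {q | ∃ (h : ι → MvPolynomial (Fin n) ℝ) (σ0 : MvPolynomial (Fin n) ℝ)
      (σ : ι → MvPolynomial (Fin n) ℝ),
    IsSOSPoly σ0 ∧ (∀ j ∈ I, IsSOSPoly (σ j)) ∧
    q = (∑ j ∈ E, h j * c j) + σ0 + ∑ j ∈ I, σ j * c j}


/-! The truncation of `y*` to degree `2d` is the moment vector `z` of the atomic measure
`∑ λⱼ δ_{vⱼ}`, and the objective only sees moments of degree `≤ 2d`; so `z` is feasible for
`f_mom` with the optimal value `f_mom,k`. Conversely, lifting an atomic measure on `K` to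
order `k` gives a feasible point of the `k`-th relaxation with the same value, since its
moment and localizing matrices are Gram matrices `∑ μⱼ gⱼ [uⱼ][uⱼ]ᵀ` with `gⱼ = 1` or
`gⱼ = c(uⱼ)`. When every `pᵢ` is constant on the atoms, `z` has the value `f(vⱼ)` of each
atom, which closes the chain `f(vⱼ) ≤ f_max ≤ f_mom`. -/

lemma mdeg_eq_degree {n : ℕ} (α : Fin n →₀ ℕ) : mdeg α = α.degree :=
  (Finsupp.degree_eq_sum α).symm

lemma mdeg_add {n : ℕ} (α β : Fin n →₀ ℕ) : mdeg (α + β) = mdeg α + mdeg β := by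
  simp only [mdeg_eq_degree, map_add]

lemma mdeg_le_totalDegree {n : ℕ} {p : MvPolynomial (Fin n) ℝ} {α : Fin n →₀ ℕ}
    (h : α ∈ p.support) : mdeg α ≤ p.totalDegree := by
  rw [mdeg_eq_degree, Finsupp.degree_apply]
  exact le_totalDegree h

lemma le_two_mul_ceilHalf (t : ℕ) : t ≤ 2 * ceilHalf t := by
  unfold ceilHalf; omega

lemma le_two_mul_of_ceilHalf_le {t d : ℕ} (h : ceilHalf t ≤ d) : t ≤ 2 * d := by
  have := le_two_mul_ceilHalf t; omega

lemma prod_pow_add_apply {n : ℕ} (x : Fin n → ℝ) (α β : Fin n →₀ ℕ) :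
    ∏ i, x i ^ (α + β) i = (∏ i, x i ^ α i) * ∏ i, x i ^ β i := by
  simp only [Finsupp.add_apply, pow_add, Finset.prod_mul_distrib]

section Atomic

variable {n : ℕ} {κ : Type*} [Fintype κ] (w : κ → ℝ) (v : κ → Fin n → ℝ) {k : ℕ}

lemma sum_smul_monoVec_apply {α : Fin n →₀ ℕ} (hα : mdeg α ≤ 2 * k) :
    (∑ j, w j • monoVec k (v j)) α = ∑ j, w j * ∏ i, v j i ^ α i := by
  simp [Finset.sum_apply, monoVec, hα]

lemma sum_smul_monoVec_zero : (∑ j, w j • monoVec k (v j)) 0 = ∑ j, w j := by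
  simp [sum_smul_monoVec_apply w v (show mdeg (0 : Fin n →₀ ℕ) ≤ 2 * k by simp [mdeg])]

lemma pairing_sum_smul_monoVec {p : MvPolynomial (Fin n) ℝ} (hp : p.totalDegree ≤ 2 * k) :
    pairing p (∑ j, w j • monoVec k (v j)) = ∑ j, w j * eval (v j) p := by
  have hα : ∀ α ∈ p.support, p.coeff α * (∑ j, w j • monoVec k (v j)) α
      = ∑ j, w j * (p.coeff α * ∏ i, v j i ^ α i) := fun α hα => by
    rw [sum_smul_monoVec_apply w v ((mdeg_le_totalDegree hα).trans hp), Finset.mul_sum]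
    exact Finset.sum_congr rfl fun j _ => by ring
  simp only [pairing, Finset.sum_congr rfl hα, eval_eq', Finset.mul_sum]
  exact Finset.sum_comm

lemma quadForm_moments (q : MvPolynomial (Fin n) ℝ) :
    ∑ α ∈ q.support, ∑ β ∈ q.support, q.coeff α * q.coeff β *
      (∑ j, w j * ∏ i, v j i ^ (α + β) i) = ∑ j, w j * eval (v j) q ^ 2 := by
  have hsq : ∀ j, eval (v j) q ^ 2 = ∑ α ∈ q.support, ∑ β ∈ q.support,
      q.coeff α * q.coeff β * ∏ i, v j i ^ (α + β) i := fun j => by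
    simp only [eval_eq', sq, Finset.sum_mul_sum, prod_pow_add_apply]
    exact Finset.sum_congr rfl fun α _ => Finset.sum_congr rfl fun β _ => by ring
  calc _ = ∑ α ∈ q.support, ∑ β ∈ q.support, ∑ j,
        w j * (q.coeff α * q.coeff β * ∏ i, v j i ^ (α + β) i) := by
        simp only [Finset.mul_sum]
        exact Finset.sum_congr rfl fun α _ => Finset.sum_congr rfl fun β _ =>
          Finset.sum_congr rfl fun j _ => by ring
    _ = ∑ α ∈ q.support, ∑ j, ∑ β ∈ q.support,
        w j * (q.coeff α * q.coeff β * ∏ i, v j i ^ (α + β) i) :=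
        Finset.sum_congr rfl fun α _ => Finset.sum_comm
    _ = _ := by simp only [hsq, Finset.mul_sum]; exact Finset.sum_comm

lemma locEntry_sum_smul_monoVec {c : MvPolynomial (Fin n) ℝ} (α β : Fin n →₀ ℕ)
    (hdeg : ∀ γ ∈ c.support, mdeg (γ + α + β) ≤ 2 * k) :
    locEntry c (∑ j, w j • monoVec k (v j)) α β
      = ∑ j, (w j * eval (v j) c) * ∏ i, v j i ^ (α + β) i := by
  have hγ : ∀ γ ∈ c.support, c.coeff γ * (∑ j, w j • monoVec k (v j)) (γ + α + β)
      = ∑ j, w j * (c.coeff γ * ∏ i, v j i ^ γ i) * ∏ i, v j i ^ (α + β) i :=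
    fun γ hγ => by
    rw [sum_smul_monoVec_apply w v (hdeg γ hγ), Finset.mul_sum]
    exact Finset.sum_congr rfl fun j _ => by rw [add_assoc, prod_pow_add_apply]; ring
  simp only [locEntry, Finset.sum_congr rfl hγ, eval_eq', Finset.mul_sum, Finset.sum_mul]
  exact Finset.sum_comm

lemma momMatPSD_sum_smul_monoVec (hw : ∀ j, 0 ≤ w j) :
    momMatPSD k (∑ j, w j • monoVec k (v j)) := by
  intro q hq
  have hαβ : ∀ α ∈ q.support, ∀ β ∈ q.support,
      (∑ j, w j • monoVec k (v j)) (α + β) = ∑ j, w j * ∏ i, v j i ^ (α + β) i :=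
    fun α hα β hβ => by
      have := mdeg_le_totalDegree hα
      have := mdeg_le_totalDegree hβ
      exact sum_smul_monoVec_apply w v (by rw [mdeg_add]; omega)
  rw [Finset.sum_congr rfl fun α hα => Finset.sum_congr rfl fun β hβ => by
    rw [hαβ α hα β hβ], quadForm_moments]
  exact Finset.sum_nonneg fun j _ => mul_nonneg (hw j) (sq_nonneg _)

lemma mdeg_add_add_le {c : MvPolynomial (Fin n) ℝ} (hc : ceilHalf c.totalDegree ≤ k)
    {α β γ : Fin n →₀ ℕ} (hγ : γ ∈ c.support) (hα : mdeg α ≤ k - ceilHalf c.totalDegree)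
    (hβ : mdeg β ≤ k - ceilHalf c.totalDegree) : mdeg (γ + α + β) ≤ 2 * k := by
  have := mdeg_le_totalDegree hγ
  have := le_two_mul_ceilHalf c.totalDegree
  rw [mdeg_add, mdeg_add]
  omega

lemma locMatZero_sum_smul_monoVec {c : MvPolynomial (Fin n) ℝ}
    (hc : ceilHalf c.totalDegree ≤ k) (hv : ∀ j, eval (v j) c = 0) :
    locMatZero c k (∑ j, w j • monoVec k (v j)) := by
  intro α β hα hβ
  rw [locEntry_sum_smul_monoVec w v α β fun γ hγ => mdeg_add_add_le hc hγ hα hβ]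
  simp [hv]

lemma locMatPSD_sum_smul_monoVec (hw : ∀ j, 0 ≤ w j) {c : MvPolynomial (Fin n) ℝ}
    (hc : ceilHalf c.totalDegree ≤ k) (hv : ∀ j, 0 ≤ eval (v j) c) :
    locMatPSD c k (∑ j, w j • monoVec k (v j)) := by
  intro q hq
  have hαβ : ∀ α ∈ q.support, ∀ β ∈ q.support, locEntry c (∑ j, w j • monoVec k (v j)) α β
      = ∑ j, (w j * eval (v j) c) * ∏ i, v j i ^ (α + β) i := fun α hα β hβ =>
    locEntry_sum_smul_monoVec w v α β fun γ hγ => mdeg_add_add_le hc hγ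
      ((mdeg_le_totalDegree hα).trans hq) ((mdeg_le_totalDegree hβ).trans hq)
  rw [Finset.sum_congr rfl fun α hα => Finset.sum_congr rfl fun β hβ => by
    rw [hαβ α hα β hβ], quadForm_moments]
  exact Finset.sum_nonneg fun j _ => mul_nonneg (mul_nonneg (hw j) (hv j)) (sq_nonneg _)

lemma momFeasible_sum_smul_monoVec {Eqs Ineqs : Set (MvPolynomial (Fin n) ℝ)}
    (hw : ∀ j, 0 ≤ w j) (hw1 : ∑ j, w j = 1)
    (hEqs : ∀ c ∈ Eqs, ceilHalf c.totalDegree ≤ k)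
    (hIneqs : ∀ c ∈ Ineqs, ceilHalf c.totalDegree ≤ k)
    (hv : ∀ j, (∀ c ∈ Eqs, eval (v j) c = 0) ∧ ∀ c ∈ Ineqs, 0 ≤ eval (v j) c) :
    momFeasible Eqs Ineqs k (∑ j, w j • monoVec k (v j)) :=
  ⟨(sum_smul_monoVec_zero w v).trans hw1, momMatPSD_sum_smul_monoVec w v hw,
    fun c hc => locMatZero_sum_smul_monoVec w v (hEqs c hc) fun j => (hv j).1 c hc,
    fun c hc => locMatPSD_sum_smul_monoVec w v hw (hIneqs c hc) fun j => (hv j).2 c hc⟩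

variable {m : ℕ} {a : Fin m → ℝ} {p : Fin m → MvPolynomial (Fin n) ℝ}

lemma objVal_sum_smul_monoVec_of_eval_eq (hp : ∀ i, (p i).totalDegree ≤ 2 * k)
    (hw1 : ∑ j, w j = 1) {j₀ : κ} (hv : ∀ i j, eval (v j) (p i) = eval (v j₀) (p i)) :
    objVal a p (∑ j, w j • monoVec k (v j)) = fObj a p (v j₀) := by
  refine Finset.sum_congr rfl fun i _ => ?_
  simp only [pairing_sum_smul_monoVec w v (hp i), hv i, ← Finset.sum_mul, hw1, one_mul]

end Atomic

section Relaxations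

variable {n m : ℕ} {a : Fin m → ℝ} {p : Fin m → MvPolynomial (Fin n) ℝ} {d : ℕ}

lemma objVal_congr (hp : ∀ i, (p i).totalDegree ≤ 2 * d) {y y' : (Fin n →₀ ℕ) → ℝ}
    (h : ∀ α, mdeg α ≤ 2 * d → y α = y' α) : objVal a p y = objVal a p y' := by
  refine Finset.sum_congr rfl fun i _ => ?_
  rw [pairing, pairing, Finset.sum_congr rfl fun α hα => by
    rw [h α ((mdeg_le_totalDegree hα).trans (hp i))]]

lemma fMax_le_fMom (hp : ∀ i, (p i).totalDegree ≤ 2 * d) (K : Set (Fin n → ℝ)) :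
    fMax a p K ≤ fMom d a p K := by
  refine sSup_le ?_
  rintro _ ⟨x, hx, rfl⟩
  rw [← objVal_sum_smul_monoVec_of_eval_eq (fun _ : Fin 1 => 1) (fun _ => x) hp (by simp)
    (fun _ _ => rfl) (j₀ := 0)]
  exact le_sSup ⟨_, ⟨⟨1, _, _, fun _ => zero_le_one, fun _ => hx, rfl⟩,
    by simp [monoVec, mdeg]⟩, rfl⟩

lemma fMom_le_fMomK (hp : ∀ i, (p i).totalDegree ≤ 2 * d) {k : ℕ} (hdk : d ≤ k)
    {Eqs Ineqs : Set (MvPolynomial (Fin n) ℝ)}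
    (hEqs : ∀ c ∈ Eqs, ceilHalf c.totalDegree ≤ k)
    (hIneqs : ∀ c ∈ Ineqs, ceilHalf c.totalDegree ≤ k) {K : Set (Fin n → ℝ)}
    (hK : ∀ x ∈ K, (∀ c ∈ Eqs, eval x c = 0) ∧ ∀ c ∈ Ineqs, 0 ≤ eval x c) :
    fMom d a p K ≤ fMomK a p Eqs Ineqs k := by
  refine sSup_le ?_
  rintro _ ⟨_, ⟨⟨l, μ, u, hμ, huK, rfl⟩, hμ1⟩, rfl⟩
  rw [sum_smul_monoVec_zero] at hμ1
  have hlift : objVal a p (∑ j, μ j • monoVec d (u j))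
      = objVal a p (∑ j, μ j • monoVec k (u j)) := objVal_congr hp fun α hα => by
    rw [sum_smul_monoVec_apply μ u hα, sum_smul_monoVec_apply μ u (by omega)]
  rw [hlift]
  exact le_sSup
    ⟨_, momFeasible_sum_smul_monoVec μ u hμ hμ1 hEqs hIneqs fun j => hK _ (huK j), rfl⟩

end Relaxations

theorem tightness_of_flat_truncation_general
    {n m : ℕ} {ι : Type*} [DecidableEq ι]
    (E I : Finset ι)
    (c : ι → MvPolynomial (Fin n) ℝ)
    (K : Set (Fin n → ℝ))
    (hK : K = {x | (∀ j ∈ E, eval x (c j) = 0) ∧ ∀ j ∈ I, 0 ≤ eval x (c j)})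
    (a : Fin m → ℝ)
    (p : Fin m → MvPolynomial (Fin n) ℝ)
    (d : ℕ)
    (hd : d = (Finset.univ.sup fun i => ceilHalf (p i).totalDegree) ⊔
      ((E ∪ I).sup fun j => ceilHalf (c j).totalDegree))
    (k : ℕ) (hdk : d ≤ k)
    (ystar : (Fin n →₀ ℕ) → ℝ)
    (hfeas : momFeasible (c '' ↑E) (c '' ↑I) k ystar)
    (hopt : objVal a p ystar = fMomK a p (c '' ↑E) (c '' ↑I) k)
    (t : ℕ) (hdt : d ≤ t)
    (r : ℕ) (hr : 1 ≤ r)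
    (lam : Fin r → ℝ) (hlam : ∀ j, 0 < lam j)
    (v : Fin r → (Fin n → ℝ)) (hvK : ∀ j, v j ∈ K)
    (hdecomp : ∀ α : Fin n →₀ ℕ, mdeg α ≤ 2 * t →
      ystar α = ∑ j, lam j * ∏ i, v j i ^ α i) :
    fMomK a p (c '' ↑E) (c '' ↑I) k = fMom d a p K ∧
    ((∀ i : Fin m, ∀ j j' : Fin r, eval (v j) (p i) = eval (v j') (p i)) →
      fMax a p K = fMom d a p K ∧
      fMax a p K = fMomK a p (c '' ↑E) (c '' ↑I) k ∧
      ∀ j, fObj a p (v j) = fMax a p K) := by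
  have hdp : ∀ i, (p i).totalDegree ≤ 2 * d := fun i => le_two_mul_of_ceilHalf_le <|
    hd ▸ le_sup_of_le_left (le_sup (f := fun i => ceilHalf (p i).totalDegree) (mem_univ i))
  have hdc : ∀ j ∈ E ∪ I, ceilHalf (c j).totalDegree ≤ k := fun j hj =>
    (hd ▸ le_sup_of_le_right (le_sup (f := fun j => ceilHalf (c j).totalDegree) hj)).trans hdk
  have hKc : ∀ x ∈ K, (∀ q ∈ c '' ↑E, eval x q = 0) ∧ ∀ q ∈ c '' ↑I, 0 ≤ eval x q :=
    fun x hx => by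
      rw [hK] at hx
      exact ⟨Set.forall_mem_image.2 hx.1, Set.forall_mem_image.2 hx.2⟩
  have hlam1 : ∑ j, lam j = 1 := by simpa [hfeas.1] using (hdecomp 0 (by simp [mdeg])).symm
  have hz : objVal a p (∑ j, lam j • monoVec d (v j)) = fMomK a p (c '' ↑E) (c '' ↑I) k :=
    hopt ▸ objVal_congr hdp fun α hα => by
      rw [sum_smul_monoVec_apply lam v hα, hdecomp α (by omega)]
  have hmomk : fMomK a p (c '' ↑E) (c '' ↑I) k = fMom d a p K := le_antisymm
    (hz ▸ le_sSup ⟨_, ⟨⟨r, lam, v, fun j => (hlam j).le, hvK, rfl⟩,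
      (sum_smul_monoVec_zero lam v).trans hlam1⟩, rfl⟩)
    (fMom_le_fMomK hdp hdk (Set.forall_mem_image.2 fun j hj => hdc j (mem_union_left _ hj))
      (Set.forall_mem_image.2 fun j hj => hdc j (mem_union_right _ hj)) hKc)
  refine ⟨hmomk, fun hconst => ?_⟩
  have hvmom : ∀ j, fObj a p (v j) = fMom d a p K := fun j => by
    rw [← objVal_sum_smul_monoVec_of_eval_eq lam v hdp hlam1 fun i j' => hconst i j' j, hz,
      hmomk]
  have hmax : fMax a p K = fMom d a p K := le_antisymm (fMax_le_fMom hdp K)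
    ((hvmom ⟨0, hr⟩).symm.le.trans (le_sSup ⟨_, hvK _, rfl⟩))
  exact ⟨hmax, hmax.trans hmomk.symm, fun j => (hvmom j).trans hmax.symm⟩

/-- **Theorem 4.1.**  If a maximizer `y*` of the `k`-th order
moment relaxation satisfies the flat truncation condition (i.e. its truncation
at degree `2t`, `d ≤ t ≤ k`, is a positive combination of monomial vectors of
distinct points of `K`), then `f_mom,k = f_mom`.  If moreover all the points
give equal values to each `pᵢ`, then `f_max = f_mom = f_mom,k` and all the
points are global maximizers of (P). -/
theorem tightness_of_flat_truncation
    {n m : ℕ} (hm : 1 ≤ m) {ι : Type*} [DecidableEq ι]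
    (E I : Finset ι) (hEI : Disjoint E I)
    (c : ι → MvPolynomial (Fin n) ℝ)
    (K : Set (Fin n → ℝ))
    (hK : K = {x | (∀ j ∈ E, eval x (c j) = 0) ∧ ∀ j ∈ I, 0 ≤ eval x (c j)})
    (a : Fin m → ℝ) (ha : ∀ i, 0 < a i)
    (p : Fin m → MvPolynomial (Fin n) ℝ)
    (hp : ∀ i, ∀ x ∈ K, 0 ≤ eval x (p i))
    (d : ℕ)
    (hd : d = (Finset.univ.sup fun i => ceilHalf (p i).totalDegree) ⊔
      ((E ∪ I).sup fun j => ceilHalf (c j).totalDegree))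
    (k : ℕ) (hdk : d ≤ k)
    (ystar : (Fin n →₀ ℕ) → ℝ)
    (hfeas : momFeasible (c '' ↑E) (c '' ↑I) k ystar)
    (hopt : objVal a p ystar = fMomK a p (c '' ↑E) (c '' ↑I) k)
    (t : ℕ) (hdt : d ≤ t) (htk : t ≤ k)
    (r : ℕ) (hr : 1 ≤ r)
    (lam : Fin r → ℝ) (hlam : ∀ j, 0 < lam j)
    (v : Fin r → (Fin n → ℝ)) (hvK : ∀ j, v j ∈ K)
    (hvdist : Function.Injective v)
    (hdecomp : ∀ α : Fin n →₀ ℕ, mdeg α ≤ 2 * t →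
      ystar α = ∑ j, lam j * ∏ i, v j i ^ α i) :
    fMomK a p (c '' ↑E) (c '' ↑I) k = fMom d a p K ∧
    ((∀ i : Fin m, ∀ j j' : Fin r, eval (v j) (p i) = eval (v j') (p i)) →
      fMax a p K = fMom d a p K ∧
      fMax a p K = fMomK a p (c '' ↑E) (c '' ↑I) k ∧
      ∀ j, fObj a p (v j) = fMax a p K) :=
  tightness_of_flat_truncation_general E I c K hK a p d hd k hdk ystar hfeas hopt t hdt r hr lam
    hlam v hvK hdecomp

end
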